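/- For all n ≥ 1, a((2^{2n+1}+1)/3) = F_{2n+1}, where a is the Stern sequence and F the Fibonacci sequence. (The number (2^{2n+1}+1)/3 has binary representation (10)^{n-1}11, i.e., it is [(10)^n]_2 + 1.) -/
import Mathlib

def stern : ℕ → ℕ
  | 0 => 0
  | 1 => 1
  | n + 2 =>
    if (n + 2) % 2 = 0 then stern ((n + 2) / 2)
    else stern ((n + 2) / 2) + stern ((n + 2) / 2 + 1)
decreasing_by all_goals omega

lemma stern_even (k : ℕ) (h : 1 ≤ k) : stern (2 * k) = stern k := by
  rw [show 2 * k = (2 * k - 2) + 2 by omega, stern]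
  have h2 : (2 * k - 2 + 2) % 2 = 0 := by omega
  simp [h2]
  congr 1
  omega

lemma stern_odd (k : ℕ) (h : 1 ≤ k) : stern (2 * k + 1) = stern k + stern (k + 1) := by
  rw [show 2 * k + 1 = (2 * k - 1) + 2 by omega, stern]
  have h2 : (2 * k - 1 + 2) % 2 = 1 := by omega
  simp [h2]
  rw [show (2 * k - 1) / 2 + 1 = k by omega]

lemma pow_two_mod_three (n : ℕ) : 2 ^ (2 * n + 1) % 3 = 2 := by
  induction n with
  | zero => rfl
  | succ k ih => rw [show 2 * (k + 1) + 1 = (2 * k + 1) + 2 by ring, pow_add]; omega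

lemma key (n : ℕ) (hn : 1 ≤ n) :
    stern ((2 ^ (2 * n + 1) + 1) / 3 - 1) = Nat.fib (2 * n) ∧
    stern ((2 ^ (2 * n + 1) + 1) / 3) = Nat.fib (2 * n + 1) := by
  induction n with
  | zero => omega
  | succ n ih =>
    rcases Nat.eq_or_lt_of_le hn with h1 | h1
    · have : n = 0 := by omega
      subst this
      have s1 : stern 1 = 1 := by simp [stern]
      have s2 : stern 2 = 1 := by
        rw [show 2 = 2 * 1 by rfl, stern_even 1 le_rfl, s1]
      have s3 : stern 3 = 2 := by
        rw [show 3 = 2 * 1 + 1 by rfl, stern_odd 1 le_rfl, s1, s2]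
      norm_num [s2, s3]
    · have hn' : 1 ≤ n := by omega
      obtain ⟨ihA, ihB⟩ := ih hn'
      have hdvd : 2 ^ (2 * n + 1) % 3 = 2 := pow_two_mod_three n
      set m := (2 ^ (2 * n + 1) + 1) / 3 with hm
      have hm3 : 3 * m = 2 ^ (2 * n + 1) + 1 := by omega
      have hmge : 2 ≤ m := by
        have : 2 ^ 3 ≤ 2 ^ (2 * n + 1) := Nat.pow_le_pow_right (by norm_num) (by omega)
        omega
      have hnew : (2 ^ (2 * (n + 1) + 1) + 1) / 3 = 4 * m - 1 := by
        have hp : 2 ^ (2 * (n + 1) + 1) = 4 * 2 ^ (2 * n + 1) := by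
          rw [show 2 * (n + 1) + 1 = 2 * n + 1 + 2 by ring]; ring
        rw [hp]; omega
      rw [hnew]
      have e1 : stern (4 * m - 2) = stern (m - 1) + stern m := by
        rw [show 4 * m - 2 = 2 * (2 * m - 1) by omega, stern_even _ (by omega),
          show 2 * m - 1 = 2 * (m - 1) + 1 by omega, stern_odd _ (by omega),
          show m - 1 + 1 = m by omega]
      have e2 : stern (4 * m - 1) = stern (m - 1) + stern m + stern m := by
        rw [show 4 * m - 1 = 2 * (2 * m - 1) + 1 by omega, stern_odd _ (by omega),
          show 2 * m - 1 + 1 = 2 * m by omega, stern_even _ (by omega),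
          show 2 * m - 1 = 2 * (m - 1) + 1 by omega, stern_odd _ (by omega),
          show m - 1 + 1 = m by omega]
      constructor
      · rw [show 4 * m - 1 - 1 = 4 * m - 2 by omega, e1, ihA, ihB,
          show 2 * (n + 1) = 2 * n + 1 + 1 by ring, Nat.fib_add_two]
      · rw [e2, ihA, ihB, show 2 * (n + 1) + 1 = (2 * n + 1) + 2 by ring]
        rw [Nat.fib_add_two, show 2*n+1+1 = 2*n+2 by rfl, Nat.fib_add_two]
        ring

theorem stern_val (n : ℕ) (hn : 1 ≤ n) :
    stern ((2 ^ (2 * n + 1) + 1) / 3) = Nat.fib (2 * n + 1) := (key n hn).2
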